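/- arXiv:math/0312234 — 4 statements merged into one kernel-verified Lean document; each statement's English description precedes it below -/
import Mathlib

section
/- Let F(X,Y) = a_0 X^r + a_1 X^{r-1}Y + ⋯ + a_r Y^r be a binary form over a field of characteristic 0 with a_0 ≠ 0, and let θ^{(1)}, ..., θ^{(r)} be the roots of F(X,1). For m = 2, ..., r define ω_m := a_0 θ^{m-1} + a_1 θ^{m-2} + ⋯ + a_{m-2} θ (evaluated at a root θ). Fix distinct indices i, j and write ∏_{k≠i,j}(X - θ^{(k)}Y) = B_0 X^{r-2} + B_1 X^{r-3}Y + ⋯ + B_{r-2} Y^{r-2}. Then for every m = 2, ..., r one has ω_m^{(i)} - ω_m^{(j)} = a_0 · B_{m-2} · (θ^{(i)} - θ^{(j)}), where ω_m^{(i)} denotes ω_m evaluated at θ^{(i)}. -/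
/-!
Since `θ⁽ⁱ⁾` is a root of `F(X,1)`, the polynomial `a₀ ∏_{l ≠ i} (X - θ⁽ˡ⁾)` is the quotient of
`F(X,1)` by `X - θ⁽ⁱ⁾`, and synthetic division (Horner's scheme) shows that its coefficient of
`X^(r-m)` is `a₀θ^(m-1) + ⋯ + a_{m-1} = ω_m(θ⁽ⁱ⁾) + a_{m-1}`. Subtracting the same identity for `j`
cancels `a_{m-1}`, and `∏_{l ≠ i} - ∏_{l ≠ j} = ((X - θ⁽ʲ⁾) - (X - θ⁽ⁱ⁾)) ∏_{l ≠ i,j}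
= (θ⁽ⁱ⁾ - θ⁽ʲ⁾) ∏_{l ≠ i,j}`.
-/

open Polynomial Finset

namespace Polynomial

theorem coeff_divByMonic_X_sub_C_eq_sum_range {R : Type*} [CommRing R] (p : R[X])
    (t : R) {d : ℕ} (hp : p.natDegree ≤ d) (k : ℕ) :
    (p /ₘ (X - C t)).coeff k = ∑ n ∈ range (d - k), p.coeff (d - n) * t ^ (d - n - (k + 1)) := by
  have hIcc : ∑ i ∈ Icc (k + 1) p.natDegree, t ^ (i - (k + 1)) * p.coeff i
      = ∑ i ∈ Ico (k + 1) (d + 1), p.coeff i * t ^ (i - (k + 1)) := by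
    refine sum_subset_zero_on_sdiff (fun i hi => ?_) (fun i hi => ?_) (fun i _ => mul_comm _ _)
    · simp only [mem_Icc, mem_Ico] at hi ⊢; omega
    · simp only [mem_sdiff, mem_Icc, mem_Ico] at hi
      rw [coeff_eq_zero_of_natDegree_lt (by omega), zero_mul]
  rw [coeff_divByMonic_X_sub_C, hIcc, range_eq_Ico,
    sum_Ico_reflect (fun i => p.coeff i * t ^ (i - (k + 1))) 0 (by omega : d - k ≤ d + 1)]
  rcases le_or_gt k d with hk | hk
  · rw [show d + 1 - (d - k) = k + 1 by omega, Nat.sub_zero]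
  · rw [Ico_eq_empty_of_le (by omega), Ico_eq_empty_of_le (by omega)]

section BinaryForm

variable {R : Type*} [CommRing R] (a : ℕ → R) (r : ℕ)

theorem natDegree_sum_range_C_mul_X_pow_sub_le :
    (∑ n ∈ range (r + 1), C (a n) * X ^ (r - n)).natDegree ≤ r :=
  natDegree_sum_le_of_forall_le _ _ fun n _ =>
    (natDegree_C_mul_X_pow_le _ _).trans (Nat.sub_le r n)

theorem coeff_sum_range_C_mul_X_pow_sub {n : ℕ} (hn : n ≤ r) :
    (∑ l ∈ range (r + 1), C (a l) * X ^ (r - l)).coeff (r - n) = a n := by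
  simp only [finsetSum_coeff, coeff_C_mul_X_pow]
  rw [sum_eq_single_of_mem n (mem_range.mpr (by omega)) fun l hl hln => if_neg (by
    simp only [mem_range] at hl; omega), if_pos rfl]

end BinaryForm

section ProdXSubC

variable {R ι : Type*} [CommRing R] [DecidableEq ι] (s : Finset ι) (θ : ι → R)

theorem C_mul_prod_X_sub_C_divByMonic (c : R) {i : ι} (hi : i ∈ s) :
    (C c * ∏ l ∈ s, (X - C (θ l))) /ₘ (X - C (θ i)) = C c * ∏ l ∈ s.erase i, (X - C (θ l)) := by
  rw [← mul_prod_erase s _ hi, mul_left_comm, mul_divByMonic_cancel_left _ (monic_X_sub_C _)]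

theorem prod_erase_X_sub_C_sub_prod_erase {i j : ι} (hi : i ∈ s) (hj : j ∈ s) :
    ∏ l ∈ s.erase i, (X - C (θ l)) - ∏ l ∈ s.erase j, (X - C (θ l))
      = C (θ i - θ j) * ∏ l ∈ (s.erase i).erase j, (X - C (θ l)) := by
  rcases eq_or_ne i j with rfl | hij
  · simp
  rw [← mul_prod_erase (s.erase i) _ (mem_erase.mpr ⟨hij.symm, hj⟩),
    ← mul_prod_erase (s.erase j) _ (mem_erase.mpr ⟨hij, hi⟩), erase_right_comm, C_sub]
  ring

end ProdXSubC

end Polynomial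

theorem stmt5_general {k : Type*} [Field k] (r : ℕ)
    (a : ℕ → k) (θ : Fin r → k)
    (hsplit : (∑ n ∈ Finset.range (r + 1), C (a n) * X ^ (r - n))
      = C (a 0) * ∏ l : Fin r, (X - C (θ l)))
    (i j : Fin r)
    (g : Polynomial k)
    (hg : g = ∏ l ∈ (Finset.univ.erase i).erase j, (X - C (θ l)))
    (m : ℕ) (hm2 : 2 ≤ m) (hmr : m ≤ r) :
    (∑ n ∈ Finset.range (m - 1), a n * θ i ^ (m - 1 - n))
      - (∑ n ∈ Finset.range (m - 1), a n * θ j ^ (m - 1 - n))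
    = a 0 * g.coeff (r - m) * (θ i - θ j) := by
  set f := ∑ n ∈ range (r + 1), C (a n) * X ^ (r - n)
  have hω : ∀ t, ∑ n ∈ range (m - 1), a n * t ^ (m - 1 - n)
      = (f /ₘ (X - C t)).coeff (r - m) - a (m - 1) := by
    intro t
    obtain ⟨s, rfl⟩ : ∃ s, m = s + 1 := ⟨m - 1, by omega⟩
    have hterm : ∀ n ∈ range (s + 1), f.coeff (r - n) * t ^ (r - n - (r - (s + 1) + 1))
        = a n * t ^ (s - n) := fun n hn => by
      rw [mem_range] at hn
      rw [coeff_sum_range_C_mul_X_pow_sub a r (by omega),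
        show r - n - (r - (s + 1) + 1) = s - n by omega]
    rw [coeff_divByMonic_X_sub_C_eq_sum_range f t (natDegree_sum_range_C_mul_X_pow_sub_le a r),
      show r - (r - (s + 1)) = s + 1 by omega, sum_congr rfl hterm, sum_range_succ,
      Nat.add_sub_cancel, Nat.sub_self, pow_zero, mul_one, add_sub_cancel_right]
  have hquot : ∀ l, f /ₘ (X - C (θ l)) = C (a 0) * ∏ l' ∈ univ.erase l, (X - C (θ l')) :=
    fun l => by rw [hsplit, C_mul_prod_X_sub_C_divByMonic _ _ _ (mem_univ l)]
  rw [hω, hω, hquot, hquot, sub_sub_sub_cancel_right, coeff_C_mul, coeff_C_mul, ← mul_sub,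
    ← coeff_sub, prod_erase_X_sub_C_sub_prod_erase _ _ (mem_univ i) (mem_univ j), ← hg,
    coeff_C_mul]
  ring

/-- Let `F = a₀X^r + a₁X^(r-1)Y + ⋯ + a_rY^r` be a binary form over a field of
characteristic 0 with `a₀ ≠ 0`, whose dehomogenization `F(X,1)` splits with roots
`θ⁽¹⁾, …, θ⁽ʳ⁾`.  For `2 ≤ m ≤ r` set `ω_m(θ) = a₀θ^(m-1) + a₁θ^(m-2) + ⋯ + a_{m-2}θ`.
Fix distinct `i ≠ j` and write `∏_{l ≠ i,j} (X - θ⁽ˡ⁾) = B₀X^(r-2) + ⋯ + B_{r-2}`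
(so `B_{m-2}` is the coefficient of `X^(r-m)`).  Then
`ω_m(θ⁽ⁱ⁾) - ω_m(θ⁽ʲ⁾) = a₀ · B_{m-2} · (θ⁽ⁱ⁾ - θ⁽ʲ⁾)`. -/
theorem stmt5 {k : Type*} [Field k] [CharZero k] (r : ℕ) (hr : 2 ≤ r)
    (a : ℕ → k) (ha0 : a 0 ≠ 0) (θ : Fin r → k)
    (hsplit : (∑ n ∈ Finset.range (r + 1), C (a n) * X ^ (r - n))
      = C (a 0) * ∏ l : Fin r, (X - C (θ l)))
    (i j : Fin r) (hij : i ≠ j)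
    (g : Polynomial k)
    (hg : g = ∏ l ∈ (Finset.univ.erase i).erase j, (X - C (θ l)))
    (m : ℕ) (hm2 : 2 ≤ m) (hmr : m ≤ r) :
    (∑ n ∈ Finset.range (m - 1), a n * θ i ^ (m - 1 - n))
      - (∑ n ∈ Finset.range (m - 1), a n * θ j ^ (m - 1 - n))
    = a 0 * g.coeff (r - m) * (θ i - θ j) :=
  stmt5_general r a θ hsplit i j g hg m hm2 hmr
end

section
/- Let k be a field of characteristic 0, F ∈ k[X,Y] an irreducible binary form of degree r with F(1,0) = a_0 ≠ 0, and θ a root of F(X,1) in an extension of k. Define ω_1 = 1 and ω_m = a_0 θ^{m-1} + a_1 θ^{m-2} + ⋯ + a_{m-2} θ for m = 2, ..., r, where F = a_0 X^r + a_1 X^{r-1} Y + ⋯ + a_r Y^r. Then ω_1, ..., ω_r form a k-basis of K = k(θ), and the discriminant of this basis equals the discriminant of F: det(Tr_{K/k}(ω_i ω_j))_{1≤i,j≤r} = D(F). -/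
/-!
With `ω_p = P_p(θ)` for `P_0 = 1` and `P_{m+1} = X · (a₀Xᵐ + ⋯ + a_m)`, the matrix expressing `ω`
in the power basis `1, θ, …, θ^{r-1}` is lower triangular with diagonal `1, a₀, …, a₀`, so
`disc ω = a₀^{2r-2} · disc(1, θ, …, θ^{r-1})`. Evaluating the latter through the `r` embeddings
`θ ↦ Θᵢ` gives `∏_{i<j} (Θᵢ - Θⱼ)²`. Since the power basis has nonzero discriminant (`K/k` is
separable), so does `ω`, which is therefore a basis.
-/

open Polynomial Finset
open scoped Matrix

section FormPolynomials

variable {R S : Type*} [CommRing R] [CommRing S] [Algebra R S] (a : ℕ → R)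

/-- `formPoly a m = F(X, 1)` for the binary form `F = ∑_{n ≤ m} aₙ X^{m-n} Yⁿ`. -/
noncomputable def formPoly (m : ℕ) : R[X] := ∑ n ∈ range (m + 1), C (a n) * X ^ (m - n)

theorem coeff_formPoly {m i : ℕ} (hi : i ≤ m) : (formPoly a m).coeff i = a (m - i) := by
  rw [formPoly, finsetSum_coeff, sum_eq_single (m - i)]
  · simp [Nat.sub_sub_self hi]
  · intro n hn hne
    simp only [coeff_C_mul_X_pow, mem_range] at hn ⊢
    exact if_neg (by omega)
  · intro h
    simp at h

theorem natDegree_formPoly_le (m : ℕ) : (formPoly a m).natDegree ≤ m :=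
  natDegree_sum_le_of_forall_le _ _ fun _ _ =>
    (natDegree_C_mul_X_pow_le _ _).trans (Nat.sub_le _ _)

variable {a} in
theorem natDegree_formPoly (ha : a 0 ≠ 0) (m : ℕ) : (formPoly a m).natDegree = m :=
  natDegree_eq_of_le_of_coeff_ne_zero (natDegree_formPoly_le a m)
    (by rwa [coeff_formPoly a le_rfl, Nat.sub_self])

variable {a} in
theorem leadingCoeff_formPoly (ha : a 0 ≠ 0) (m : ℕ) : (formPoly a m).leadingCoeff = a 0 := by
  rw [leadingCoeff, natDegree_formPoly ha, coeff_formPoly a le_rfl, Nat.sub_self]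

/-- Indexing from `0`: `aeval θ (omegaPoly a p)` is the paper's `ω_{p+1}`. -/
noncomputable def omegaPoly : ℕ → R[X]
  | 0 => 1
  | m + 1 => X * formPoly a m

theorem natDegree_omegaPoly_le : ∀ p, (omegaPoly a p).natDegree ≤ p
  | 0 => by simp [omegaPoly]
  | m + 1 => natDegree_mul_le.trans <|
      (add_le_add natDegree_X_le (natDegree_formPoly_le a m)).trans_eq (add_comm _ _)

theorem coeff_omegaPoly_self : ∀ p, (omegaPoly a p).coeff p = if p = 0 then 1 else a 0
  | 0 => by simp [omegaPoly]
  | m + 1 => by simp [omegaPoly, coeff_X_mul, coeff_formPoly]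

theorem aeval_omegaPoly (x : S) : ∀ p, aeval x (omegaPoly a p) =
    if p = 0 then 1 else ∑ n ∈ range p, algebraMap R S (a n) * x ^ (p - n)
  | 0 => by simp [omegaPoly]
  | m + 1 => by
    simp only [omegaPoly, formPoly, map_mul, aeval_X, map_sum, aeval_C, map_pow, mul_sum,
      Nat.add_one_ne_zero, if_false]
    refine sum_congr rfl fun n hn => ?_
    rw [Nat.sub_add_comm (Nat.le_of_lt_succ (mem_range.mp hn)), pow_succ]
    ring

theorem Matrix.map_coeff_mulVec_pow {n : ℕ} (P : Fin n → R[X]) (hP : ∀ i, (P i).natDegree < n)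
    (x : S) : (Matrix.of fun i j : Fin n => (P i).coeff j).map (algebraMap R S) *ᵥ
      (fun j : Fin n => x ^ (j : ℕ)) = fun i => aeval x (P i) := by
  funext i
  rw [aeval_eq_sum_range' (hP i), ← Fin.sum_univ_eq_sum_range]
  simp [Matrix.mulVec, dotProduct, Algebra.smul_def]

theorem det_omegaPoly_coeff (n : ℕ) :
    (Matrix.of fun p q : Fin n => (omegaPoly a p).coeff q).det = a 0 ^ (n - 1) := by
  have hlower : (Matrix.of fun p q : Fin n => (omegaPoly a p).coeff q).IsLowerTriangular :=
    fun p q hpq => coeff_eq_zero_of_natDegree_lt ((natDegree_omegaPoly_le a p).trans_lt hpq)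
  rw [Matrix.det_of_isLowerTriangular _ hlower]
  simp only [Matrix.of_apply, coeff_omegaPoly_self]
  cases n with
  | zero => simp
  | succ n => simp [Fin.prod_univ_succ]

theorem PowerBasis.discr_aeval_omegaPoly (pb : PowerBasis R S) :
    Algebra.discr R (fun p : Fin pb.dim => aeval pb.gen (omegaPoly a p)) =
      (a 0 ^ (pb.dim - 1)) ^ 2 * Algebra.discr R pb.basis := by
  rw [← Matrix.map_coeff_mulVec_pow _ fun p => (natDegree_omegaPoly_le a p).trans_lt p.isLt,
    ← pb.coe_basis, Algebra.discr_of_matrix_mulVec, det_omegaPoly_coeff]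

end FormPolynomials

section Discriminant

variable {k K L : Type*} [Field k] [Field K] [Field L] [Algebra k K] [Algebra k L]

theorem Algebra.exists_basis_coe_eq_of_discr_ne_zero [Module.Finite k K] {ι : Type*} [Fintype ι]
    [DecidableEq ι] {b : ι → K} (hb : Algebra.discr k b ≠ 0)
    (hcard : Fintype.card ι = Module.finrank k K) : ∃ B : Module.Basis ι k K, ⇑B = b := by
  have : Nonempty ι := Fintype.card_pos_iff.mp (hcard ▸ Module.finrank_pos)
  have hli : LinearIndependent k b := by
    by_contra h
    exact hb (Algebra.discr_zero_of_not_linearIndependent k h)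
  exact ⟨basisOfLinearIndependentOfCardEqFinrank hli hcard,
    coe_basisOfLinearIndependentOfCardEqFinrank hli hcard⟩

theorem PowerBasis.algebraMap_discr_eq_prod_sq_sub [Algebra.IsSeparable k K]
    (pb : PowerBasis k K) (Θ : Fin pb.dim → L)
    (hΘ : (minpoly k pb.gen).map (algebraMap k L) = ∏ i, (X - C (Θ i))) :
    algebraMap k L (Algebra.discr k pb.basis) = ∏ i, ∏ j ∈ Ioi i, (Θ i - Θ j) ^ 2 := by
  -- `Algebra.discr_powerBasis_eq_prod` wants an algebraically closed target.
  let E := AlgebraicClosure L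
  have := pb.finite
  have hΘE : ∀ i, aeval (algebraMap L E (Θ i)) (minpoly k pb.gen) = 0 := fun i => by
    rw [aeval_algebraMap_apply, aeval_def, eval₂_eq_eval_map, hΘ, eval_prod,
      prod_eq_zero (mem_univ i) (by simp), map_zero]
  have hinj : Function.Injective Θ := separable_prod_X_sub_C_iff.mp
    (hΘ ▸ Separable.map (Algebra.IsSeparable.isSeparable k pb.gen))
  let σ : Fin pb.dim → (K →ₐ[k] E) := fun i => pb.lift _ (hΘE i)
  have hσ : Function.Bijective σ := by
    refine (Fintype.bijective_iff_injective_and_card σ).mpr ⟨fun i j hij => hinj ?_, ?_⟩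
    · simpa [σ, PowerBasis.lift_gen] using congrArg (· pb.gen) hij
    · rw [AlgHom.card, pb.finrank, Fintype.card_fin]
  apply (algebraMap L E).injective
  rw [← IsScalarTower.algebraMap_apply,
    Algebra.discr_powerBasis_eq_prod k E pb (.ofBijective σ hσ)]
  simp [σ, PowerBasis.lift_gen, sub_sq_comm]

end Discriminant

theorem stmt14_general {k K L : Type*} [Field k] [CharZero k] [Field K] [Algebra k K]
    [Field L] [Algebra k L]
    (r : ℕ) (a : ℕ → k) (ha0 : a 0 ≠ 0)
    (f : Polynomial k) (hf : f = ∑ n ∈ Finset.range (r + 1), C (a n) * X ^ (r - n))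
    (hirr : Irreducible f) (θ : K) (hθ : Polynomial.aeval θ f = 0)
    (hgen : Algebra.adjoin k {θ} = ⊤)
    (Θ : Fin r → L)
    (hsplit : f.map (algebraMap k L)
      = C (algebraMap k L (a 0)) * ∏ i : Fin r, (X - C (Θ i)))
    (ω : Fin r → K)
    (hω : ∀ p : Fin r, ω p = if (p : ℕ) = 0 then 1
      else ∑ n ∈ Finset.range p, algebraMap k K (a n) * θ ^ ((p : ℕ) - n)) :
    (∃ b : Module.Basis (Fin r) k K, ⇑b = ω) ∧
    algebraMap k L (Matrix.det (Matrix.of fun p q : Fin r => Algebra.trace k K (ω p * ω q)))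
      = algebraMap k L (a 0) ^ (2 * r - 2) *
        ∏ p : Fin r, ∏ q ∈ Finset.Ioi p, (Θ p - Θ q) ^ 2 := by
  change f = formPoly a r at hf
  have hmin : minpoly k θ = f * C (a 0)⁻¹ := by
    rw [← minpoly.eq_of_irreducible hirr hθ, hf, leadingCoeff_formPoly ha0]
  obtain ⟨pb, rfl⟩ : ∃ pb : PowerBasis k K, pb.gen = θ :=
    ⟨.ofAdjoinEqTop (IsAlgebraic.isIntegral ⟨f, hirr.ne_zero, hθ⟩) hgen, rfl⟩
  have := pb.finite
  obtain rfl : pb.dim = r := by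
    rw [← pb.natDegree_minpoly, hmin, natDegree_mul_C (inv_ne_zero ha0), hf,
      natDegree_formPoly ha0]
  obtain rfl : ω = fun p : Fin pb.dim => aeval pb.gen (omegaPoly a p) :=
    funext fun p => by rw [hω, aeval_omegaPoly]
  have hdisc := pb.discr_aeval_omegaPoly a
  have hΘ : (minpoly k pb.gen).map (algebraMap k L) = ∏ i, (X - C (Θ i)) := by
    rw [hmin, Polynomial.map_mul, hsplit, Polynomial.map_C, mul_comm, ← mul_assoc, ← C_mul,
      map_inv₀, inv_mul_cancel₀ (by simpa), C_1, one_mul]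
  refine ⟨Algebra.exists_basis_coe_eq_of_discr_ne_zero ?_ (by simp [pb.finrank]), ?_⟩
  · rw [hdisc]
    exact mul_ne_zero (pow_ne_zero _ (pow_ne_zero _ ha0)) (Algebra.discr_not_zero_of_basis k _)
  · change algebraMap k L (Algebra.discr k _) = _
    rw [hdisc, map_mul, pb.algebraMap_discr_eq_prod_sq_sub Θ hΘ, map_pow, map_pow, ← pow_mul,
      show (pb.dim - 1) * 2 = 2 * pb.dim - 2 by omega]

/-- Let `F = a₀X^r + ⋯ + a_rY^r` be an irreducible binary form over a field `k`
of characteristic 0 with `a₀ ≠ 0`, `θ` a root of `F(X,1)` generating `K = k(θ)`, and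
`Θ⁽¹⁾,…,Θ⁽ʳ⁾` the roots of `F(X,1)` in a splitting field `L`.  The elements `ω₁ = 1`,
`ω_m = a₀θ^{m-1} + a₁θ^{m-2} + ⋯ + a_{m-2}θ` (`m = 2,…,r`) form a `k`-basis of `K`, and the
discriminant of this basis equals the discriminant of the form:
`det(Tr_{K/k}(ωᵢωⱼ)) = D(F) = a₀^{2r-2} ∏_{i<j} (Θ⁽ⁱ⁾-Θ⁽ʲ⁾)²`. -/
theorem stmt14 {k K L : Type*} [Field k] [CharZero k] [Field K] [Algebra k K]
    [Field L] [Algebra k L]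
    (r : ℕ) (hr : 1 ≤ r) (a : ℕ → k) (ha0 : a 0 ≠ 0)
    (f : Polynomial k) (hf : f = ∑ n ∈ Finset.range (r + 1), C (a n) * X ^ (r - n))
    (hirr : Irreducible f) (θ : K) (hθ : Polynomial.aeval θ f = 0)
    (hgen : Algebra.adjoin k {θ} = ⊤)
    (Θ : Fin r → L)
    (hsplit : f.map (algebraMap k L)
      = C (algebraMap k L (a 0)) * ∏ i : Fin r, (X - C (Θ i)))
    (ω : Fin r → K)
    (hω : ∀ p : Fin r, ω p = if (p : ℕ) = 0 then 1
      else ∑ n ∈ Finset.range p, algebraMap k K (a n) * θ ^ ((p : ℕ) - n)) :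
    (∃ b : Module.Basis (Fin r) k K, ⇑b = ω) ∧
    algebraMap k L (Matrix.det (Matrix.of fun p q : Fin r => Algebra.trace k K (ω p * ω q)))
      = algebraMap k L (a 0) ^ (2 * r - 2) *
        ∏ p : Fin r, ∏ q ∈ Finset.Ioi p, (Θ p - Θ q) ^ 2 :=
  stmt14_general r a ha0 f hf hirr θ hθ hgen Θ hsplit ω hω
end

section
/- Let O be a Dedekind domain with fraction field k, L a finite extension of k, and O_L the integral closure of O in L (assumed to be a Dedekind domain with all residue extensions separable). For nonzero polynomials f, g ∈ L[X_1, ..., X_m], let [f] denote the fractional O_L-ideal generated by the coefficients of f. Then [fg] = [f]·[g] (Gauss's Lemma for Dedekind domains). -/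
open Submodule MvPolynomial

section Aux

variable {R L : Type*} [CommRing R] [IsDomain R] [Field L] [Algebra R L] [IsFractionRing R L]
variable {m : ℕ}

/-- In the fraction field of a valuation ring, any two elements are comparable by
divisibility over the ring. -/
lemma aux_smul_total [ValuationRing R] (x y : L) :
    (∃ r : R, x = r • y) ∨ (∃ r : R, y = r • x) := by
  by_cases hy : y = 0
  · by_cases hx : x = 0
    · exact Or.inl ⟨0, by simp [hx, hy]⟩
    · exact Or.inr ⟨0, by simp [hy]⟩
  rcases ValuationRing.isInteger_or_isInteger R (x / y) with ⟨r, hr⟩ | ⟨r, hr⟩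
  · exact Or.inl ⟨r, by rw [Algebra.smul_def, hr, div_mul_cancel₀ _ hy]⟩
  · by_cases hx : x = 0
    · exact Or.inl ⟨0, by simp [hx]⟩
    · rw [inv_div] at hr
      exact Or.inr ⟨r, by rw [Algebra.smul_def, hr, div_mul_cancel₀ _ hx]⟩

/-- Over a valuation ring, the span of a finite subset of the fraction field is principal,
generated by one of its elements (or `0`). -/
lemma aux_span_finset_singleton [ValuationRing R] (s : Finset L) :
    ∃ c, (c = 0 ∨ c ∈ s) ∧ Submodule.span R (s : Set L) = Submodule.span R {c} := by
  classical
  induction s using Finset.induction_on with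
  | empty => exact ⟨0, Or.inl rfl, by simp⟩
  | @insert a s ha ih =>
    obtain ⟨c, hc, hs⟩ := ih
    rcases aux_smul_total (R := R) a c with ⟨r, hr⟩ | ⟨r, hr⟩
    · refine ⟨c, ?_, ?_⟩
      · rcases hc with h | h
        · exact Or.inl h
        · exact Or.inr (Finset.mem_insert.mpr (Or.inr h))
      · rw [Finset.coe_insert, Submodule.span_insert, hs, sup_eq_right]
        refine Submodule.span_le.mpr (Set.singleton_subset_iff.mpr ?_)
        rw [hr]
        exact Submodule.smul_mem _ r (Submodule.mem_span_singleton_self c)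
    · refine ⟨a, Or.inr (Finset.mem_insert_self _ _), ?_⟩
      rw [Finset.coe_insert, Submodule.span_insert, hs, sup_eq_left]
      refine Submodule.span_le.mpr (Set.singleton_subset_iff.mpr ?_)
      rw [hr]
      exact Submodule.smul_mem _ r (Submodule.mem_span_singleton_self a)

/-- The content of `C a * f` is `span {a}` times the content of `f`. -/
lemma aux_cont_C_mul (a : L) (f : MvPolynomial (Fin m) L) :
    Submodule.span R (Set.range fun s => MvPolynomial.coeff s (C a * f))
      = Submodule.span R {a} * Submodule.span R (Set.range fun s => MvPolynomial.coeff s f) := by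
  rw [Submodule.span_mul_span, Set.singleton_mul]
  congr 1
  ext x
  simp only [Set.mem_range, Set.mem_image, coeff_C_mul]
  constructor
  · rintro ⟨s, rfl⟩; exact ⟨_, ⟨s, rfl⟩, rfl⟩
  · rintro ⟨_, ⟨s, rfl⟩, rfl⟩; exact ⟨s, rfl⟩

/-- A polynomial all of whose coefficients are in the range of `φ` comes from `map φ`. -/
lemma aux_exists_map_eq {R' L' : Type*} [CommSemiring R'] [CommSemiring L'] (φ : R' →+* L')
    (f : MvPolynomial (Fin m) L') (h : ∀ s, MvPolynomial.coeff s f ∈ Set.range φ) :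
    ∃ F : MvPolynomial (Fin m) R', MvPolynomial.map φ F = f := by
  classical
  choose c hc using h
  refine ⟨∑ s ∈ f.support, monomial s (c s), ?_⟩
  rw [map_sum]
  simp only [map_monomial, hc]
  exact support_sum_monomial_coeff f

/-- Over a valuation ring, the content of a nonzero polynomial is a principal submodule
generated by a nonzero element. -/
lemma aux_exists_cont_eq [ValuationRing R] (f : MvPolynomial (Fin m) L) (hf : f ≠ 0) :
    ∃ a : L, a ≠ 0 ∧
      Submodule.span R (Set.range fun s => MvPolynomial.coeff s f) = Submodule.span R {a} := by
  classical
  obtain ⟨c, hc, hs⟩ :=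
    aux_span_finset_singleton (R := R) (insert (0 : L) (f.support.image fun t => coeff t f))
  have h1 : Submodule.span R (Set.range fun s => MvPolynomial.coeff s f)
      = Submodule.span R ((insert (0 : L) (f.support.image fun t => coeff t f) : Finset L) :
          Set L) := by
    apply le_antisymm
    · rw [Submodule.span_le]
      rintro _ ⟨t, rfl⟩
      apply Submodule.subset_span
      simp only [Finset.coe_insert, Set.mem_insert_iff, Finset.coe_image, Set.mem_image]
      by_cases h : coeff t f = 0
      · exact Or.inl h
      · exact Or.inr ⟨t, by simpa using h, rfl⟩
    · rw [Submodule.span_le]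
      intro x hx
      simp only [Finset.coe_insert, Set.mem_insert_iff, Finset.coe_image, Set.mem_image] at hx
      rcases hx with rfl | ⟨t, _, rfl⟩
      · exact Submodule.zero_mem _
      · exact Submodule.subset_span ⟨t, rfl⟩
  refine ⟨c, ?_, h1.trans hs⟩
  rintro rfl
  apply hf
  ext t
  have ht : coeff t f ∈ Submodule.span R ({(0 : L)} : Set L) := by
    rw [← hs, ← h1]
    exact Submodule.subset_span ⟨t, rfl⟩
  rw [Submodule.span_zero_singleton] at ht
  simpa using ht

/-- Key case: if two polynomials have content `1`, so does their product. -/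
lemma aux_cont_mul_one [IsLocalRing R] (f g : MvPolynomial (Fin m) L)
    (hf1 : Submodule.span R (Set.range fun s => MvPolynomial.coeff s f) = 1)
    (hg1 : Submodule.span R (Set.range fun s => MvPolynomial.coeff s g) = 1) :
    Submodule.span R (Set.range fun s => MvPolynomial.coeff s (f * g)) = 1 := by
  classical
  have hinj : Function.Injective (algebraMap R L) := IsFractionRing.injective R L
  have hrange : ∀ (h : MvPolynomial (Fin m) L),
      Submodule.span R (Set.range fun s => MvPolynomial.coeff s h) = 1 →
      ∀ s, MvPolynomial.coeff s h ∈ Set.range (algebraMap R L) := by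
    intro h hh s
    have : coeff s h ∈ (1 : Submodule R L) := hh ▸ Submodule.subset_span ⟨s, rfl⟩
    obtain ⟨y, hy⟩ := Submodule.mem_one.mp this
    exact ⟨y, hy⟩
  obtain ⟨F, hF⟩ := aux_exists_map_eq (algebraMap R L) f (hrange f hf1)
  obtain ⟨G, hG⟩ := aux_exists_map_eq (algebraMap R L) g (hrange g hg1)
  have hmap : ∀ (H : MvPolynomial (Fin m) R),
      Submodule.span R (Set.range fun s => MvPolynomial.coeff s (map (algebraMap R L) H))
        = Submodule.map (Algebra.linearMap R L)
            (Submodule.span R (Set.range fun s => MvPolynomial.coeff s H)) := by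
    intro H
    rw [Submodule.map_span]
    congr 1
    ext x
    simp only [Set.mem_image, Set.mem_range, coeff_map, Algebra.linearMap_apply]
    constructor
    · rintro ⟨s, rfl⟩; exact ⟨_, ⟨s, rfl⟩, rfl⟩
    · rintro ⟨_, ⟨s, rfl⟩, rfl⟩; exact ⟨s, rfl⟩
  -- contents of F and G are the unit ideal
  have hmapinj := Submodule.map_injective_of_injective
    (f := Algebra.linearMap R L) (by exact hinj)
  have hFtop : Submodule.span R (Set.range fun s => MvPolynomial.coeff s F) = ⊤ := by
    apply hmapinj
    rw [← hmap F, hF, hf1, Submodule.map_top, Submodule.one_eq_range]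
  have hGtop : Submodule.span R (Set.range fun s => MvPolynomial.coeff s G) = ⊤ := by
    apply hmapinj
    rw [← hmap G, hG, hg1, Submodule.map_top, Submodule.one_eq_range]
  have hFGtop : Submodule.span R (Set.range fun s => MvPolynomial.coeff s (F * G)) = ⊤ := by
    by_contra hne
    have hle := IsLocalRing.le_maximalIdeal (R := R) hne
    set π := Ideal.Quotient.mk (IsLocalRing.maximalIdeal R)
    have hzero : MvPolynomial.map π (F * G) = 0 := by
      ext t
      rw [coeff_map, coeff_zero, Ideal.Quotient.eq_zero_iff_mem]
      exact hle (Submodule.subset_span ⟨t, rfl⟩)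
    have hne0 : ∀ (H : MvPolynomial (Fin m) R),
        Submodule.span R (Set.range fun s => MvPolynomial.coeff s H) = ⊤ →
        MvPolynomial.map π H ≠ 0 := by
      intro H hH h0
      have : Submodule.span R (Set.range fun s => MvPolynomial.coeff s H)
          ≤ IsLocalRing.maximalIdeal R := by
        rw [Submodule.span_le]
        rintro _ ⟨t, rfl⟩
        exact Ideal.Quotient.eq_zero_iff_mem.mp (by rw [← coeff_map, h0, coeff_zero])
      rw [hH] at this
      exact (IsLocalRing.maximalIdeal.isMaximal R).ne_top (top_le_iff.mp this)
    rw [map_mul] at hzero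
    exact mul_ne_zero (hne0 F hFtop) (hne0 G hGtop) hzero
  rw [← hF, ← hG, ← map_mul, hmap, hFGtop, Submodule.map_top, Submodule.one_eq_range]

/-- Gauss's lemma over a valuation ring with fraction field `L`. -/
lemma aux_key [ValuationRing R] (f g : MvPolynomial (Fin m) L) (hf : f ≠ 0) (hg : g ≠ 0) :
    Submodule.span R (Set.range fun s => MvPolynomial.coeff s (f * g))
      = Submodule.span R (Set.range fun s => MvPolynomial.coeff s f) *
        Submodule.span R (Set.range fun s => MvPolynomial.coeff s g) := by
  obtain ⟨a, ha, hA⟩ := aux_exists_cont_eq (R := R) f hf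
  obtain ⟨b, hb, hB⟩ := aux_exists_cont_eq (R := R) g hg
  set f' : MvPolynomial (Fin m) L := C a⁻¹ * f with hf'def
  set g' : MvPolynomial (Fin m) L := C b⁻¹ * g with hg'def
  have hsingle : ∀ (u v : L), (Submodule.span R {u}) * (Submodule.span R {v})
      = Submodule.span R {u * v} := by
    intro u v
    rw [Submodule.span_mul_span, Set.singleton_mul_singleton]
  have hone : Submodule.span R ({1} : Set L) = 1 := by
    rw [← Submodule.one_eq_span]
  have hf1 : Submodule.span R (Set.range fun s => MvPolynomial.coeff s f') = 1 := by
    rw [hf'def, aux_cont_C_mul, hA, hsingle, inv_mul_cancel₀ ha, hone]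
  have hg1 : Submodule.span R (Set.range fun s => MvPolynomial.coeff s g') = 1 := by
    rw [hg'def, aux_cont_C_mul, hB, hsingle, inv_mul_cancel₀ hb, hone]
  have hfg1 := aux_cont_mul_one (R := R) f' g' hf1 hg1
  have hfa : C a * f' = f := by
    rw [hf'def, ← mul_assoc, ← map_mul, mul_inv_cancel₀ ha, map_one, one_mul]
  have hgb : C b * g' = g := by
    rw [hg'def, ← mul_assoc, ← map_mul, mul_inv_cancel₀ hb, map_one, one_mul]
  have hprod : f * g = C (a * b) * (f' * g') := by
    rw [← hfa, ← hgb, map_mul]; ring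
  rw [hprod, aux_cont_C_mul, hfg1, mul_one, hA, hB, hsingle]

end Aux

/-- Gauss's Lemma for Dedekind domains: Let `A` be a Dedekind domain with
fraction field `L` (in the paper, `A = O_{L,S}` is the integral closure of a ring of
`S`-integers, a Dedekind domain).  For a nonzero polynomial `f ∈ L[X₁,…,X_m]`, let `[f]` be the
fractional `A`-ideal (here: the `A`-submodule of `L`) generated by the coefficients of `f`.
Then `[fg] = [f]·[g]`. -/
theorem stmt16 {A L : Type*} [CommRing A] [IsDedekindDomain A] [Field L]
    [Algebra A L] [IsFractionRing A L] (m : ℕ)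
    (f g : MvPolynomial (Fin m) L) (hf : f ≠ 0) (hg : g ≠ 0) :
    Submodule.span A (Set.range fun s => MvPolynomial.coeff s (f * g))
      = Submodule.span A (Set.range fun s => MvPolynomial.coeff s f) *
        Submodule.span A (Set.range fun s => MvPolynomial.coeff s g) := by
  classical
  letI algL : ∀ (P : Ideal A) [P.IsMaximal], Algebra (Localization.AtPrime P) L :=
    fun P _ => IsLocalization.localizationAlgebraOfSubmonoidLe _ _ P.primeCompl
      (nonZeroDivisors A) P.primeCompl_le_nonZeroDivisors
  haveI tower : ∀ (P : Ideal A) [P.IsMaximal], IsScalarTower A (Localization.AtPrime P) L :=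
    fun P _ => IsLocalization.localization_isScalarTower_of_submonoid_le _ _ _ _
      P.primeCompl_le_nonZeroDivisors
  haveI frac : ∀ (P : Ideal A) [P.IsMaximal], IsFractionRing (Localization.AtPrime P) L :=
    fun P _ => IsFractionRing.isFractionRing_of_isDomain_of_isLocalization P.primeCompl _ _
  haveI valu : ∀ (P : Ideal A) [P.IsMaximal], ValuationRing (Localization.AtPrime P) := by
    intro P hP
    by_cases hbot : P = ⊥
    · subst hbot
      have hfield : IsField (Localization.AtPrime (⊥ : Ideal A)) := by
        rw [IsLocalRing.isField_iff_maximalIdeal_eq, ← Localization.AtPrime.map_eq_maximalIdeal,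
          Ideal.map_bot]
      letI := hfield.toField
      infer_instance
    · haveI := IsLocalization.AtPrime.isDiscreteValuationRing_of_dedekind_domain A hbot
        (Localization.AtPrime P)
      infer_instance
  haveI locmod : ∀ (P : Ideal A) [P.IsMaximal],
      IsLocalizedModule P.primeCompl (LinearMap.id : L →ₗ[A] L) :=
    fun P _ =>
      haveI : IsScalarTower A (Localization.AtPrime P) L := tower P
      isLocalizedModule_id P.primeCompl L (Localization.AtPrime P)
  rw [Submodule.span_mul_span]
  refine @Submodule.eq_of_localization_maximal A L _ _ _
    (fun P _ => Localization.AtPrime P) (fun P _ => inferInstance) (fun P _ => inferInstance)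
    (fun P _ => inferInstance)
    (fun P _ => L) (fun P _ => inferInstance) (fun P _ => inferInstance)
    (fun P _ => Algebra.toModule) (fun P _ => tower P)
    (fun P _ => LinearMap.id) (fun P _ => locmod P) _ _ (fun P hP => ?_)
  rw [Submodule.localized'_span, Submodule.localized'_span]
  simp only [LinearMap.id_coe, Set.image_id]
  rw [← Submodule.span_mul_span]
  exact aux_key (R := Localization.AtPrime P) f g hf hg
end

section
/- Let O_S be the ring of S-integers of a number field and let a be a nonzero ideal of O_S such that a^2 = (λ) is principal. Write a = (α, β) with two generators. Then there exist ξ, η ∈ O_S with ξα^2 - ηβ^2 = λ. Moreover, for every place v ∉ S, the matrix (α, β; ηβ, ξα) has determinant λ, and writing a·O_v = (μ) in the localization O_v, the matrix (α/μ, β/μ; ηβ/μ, ξα/μ) lies in GL_2(O_v). -/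
open IsDedekindDomain

/-- Let `O_S` be the ring of `S`-integers of a number field (a Dedekind domain
`A`), and let `a = (α, β)` be a nonzero ideal with `a² = (λ)` principal.  Then there are
`ξ, η ∈ A` with `ξα² - ηβ² = λ`; the matrix `(α, β; ηβ, ξα)` has determinant `λ`; and for
every nonzero prime `P` (place `v ∉ S`), writing `a·A_P = (μ)` in the localization `A_P`, the
matrix `(α/μ, β/μ; ηβ/μ, ξα/μ)` lies in `GL₂(A_P)`. -/
theorem stmt18 {A : Type*} [CommRing A] [IsDedekindDomain A]
    (a : Ideal A) (ha : a ≠ ⊥) (α β lam : A)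
    (hgen : a = Ideal.span {α, β}) (hsq : a ^ 2 = Ideal.span {lam}) :
    ∃ ξ η : A, ξ * α ^ 2 - η * β ^ 2 = lam ∧
      Matrix.det !![α, β; η * β, ξ * α] = lam ∧
      ∀ (P : HeightOneSpectrum A) (μ : Localization.AtPrime P.asIdeal),
        Ideal.map (algebraMap A (Localization.AtPrime P.asIdeal)) a = Ideal.span {μ} →
        ∃ M : Matrix (Fin 2) (Fin 2) (Localization.AtPrime P.asIdeal),
          IsUnit M.det ∧
          μ • M = (!![α, β; η * β, ξ * α]).map
            (algebraMap A (Localization.AtPrime P.asIdeal)) := by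
  have key : Ideal.span {α^2, β^2} * a = a^2 * a := by
    rw [hgen]
    simp only [Ideal.span_insert, Ideal.mul_sup, Ideal.sup_mul, pow_two,
      Ideal.span_singleton_mul_span_singleton]
    ring_nf
    simp [sup_assoc, sup_comm, sup_left_comm, Ideal.span_singleton_mul_span_singleton,
      mul_comm, mul_left_comm, mul_assoc]
  have key2 : Ideal.span {α^2, β^2} = a ^ 2 :=
    mul_right_cancel₀ (by rwa [Ne, Ideal.zero_eq_bot]) key
  have hlam : lam ∈ Ideal.span {α^2, β^2} := by
    rw [key2, hsq]; exact Ideal.mem_span_singleton_self lam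
  rw [Ideal.mem_span_pair] at hlam
  obtain ⟨ξ, c, hξc⟩ := hlam
  refine ⟨ξ, -c, by rw [← hξc]; ring, by simp [Matrix.det_fin_two_of]; linear_combination hξc, ?_⟩
  intro P μ hμ
  set f : A →+* Localization.AtPrime P.asIdeal := algebraMap A _ with hf
  have hinj : Function.Injective f := IsLocalization.injective (Localization.AtPrime P.asIdeal) P.asIdeal.primeCompl_le_nonZeroDivisors
  have hα : α ∈ a := by rw [hgen]; exact Ideal.subset_span (by simp)
  have hβ : β ∈ a := by rw [hgen]; exact Ideal.subset_span (by simp)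
  have hαμ : μ ∣ f α := by
    rw [← Ideal.mem_span_singleton, ← hμ]; exact Ideal.mem_map_of_mem f hα
  have hβμ : μ ∣ f β := by
    rw [← Ideal.mem_span_singleton, ← hμ]; exact Ideal.mem_map_of_mem f hβ
  obtain ⟨a0, ha0⟩ := hαμ
  obtain ⟨b0, hb0⟩ := hβμ
  -- span{f lam} = span {μ^2}
  have hmapsq : Ideal.span {f lam} = Ideal.span {μ ^ 2} := by
    have : Ideal.map f (a ^ 2) = Ideal.span {μ} ^ 2 := by rw [Ideal.map_pow, hμ]
    rw [hsq] at this
    have h2 : Ideal.map f (Ideal.span {lam}) = Ideal.span {f lam} := by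
      rw [Ideal.map_span, Set.image_singleton]
    rw [← h2, this, Ideal.span_singleton_pow]
  rw [Ideal.span_singleton_eq_span_singleton] at hmapsq
  obtain ⟨u, hu⟩ := hmapsq
  -- μ ≠ 0
  have hμ0 : μ ≠ 0 := by
    rintro rfl
    have h0 : f lam * u = 0 := by rw [hu]; ring
    have hl0 : f lam = 0 := by
      have := congrArg (fun x => x * ((u⁻¹ : _ˣ) : Localization.AtPrime P.asIdeal)) h0
      simpa using this
    have : lam = 0 := hinj (by simpa using hl0)
    subst this
    rw [Ideal.span_singleton_eq_bot.mpr rfl, ← Ideal.zero_eq_bot] at hsq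
    have : a = 0 := pow_eq_zero_iff (n := 2) (by norm_num) |>.mp hsq
    exact ha (by rw [← Ideal.zero_eq_bot]; exact this)
  refine ⟨!![a0, b0; f (-c) * b0, f ξ * a0], ?_, ?_⟩
  · have hdet : μ ^ 2 * (f ξ * a0 ^ 2 - f (-c) * b0 ^ 2) = f lam := by
      rw [← hξc]; push_cast [map_add, map_mul, map_neg, map_pow]
      rw [ha0, hb0]; ring
    have : μ ^ 2 * ((f ξ * a0 ^ 2 - f (-c) * b0 ^ 2) * u) = μ ^ 2 * 1 := by
      rw [← mul_assoc, hdet, hu]; ring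
    have hunit : (f ξ * a0 ^ 2 - f (-c) * b0 ^ 2) * u = 1 :=
      mul_left_cancel₀ (pow_ne_zero 2 hμ0) this
    have hd : (!![a0, b0; f (-c) * b0, f ξ * a0]).det = f ξ * a0 ^ 2 - f (-c) * b0 ^ 2 := by
      simp [Matrix.det_fin_two_of]; ring
    rw [hd]
    exact IsUnit.of_mul_eq_one _ hunit
  · ext i j
    fin_cases i <;> fin_cases j <;>
      simp [Matrix.smul_apply, ha0, hb0, map_mul, map_neg] <;> ring
end
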